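/- If (δ, ε) is a tree-like pair of maps, then there is a unique least-resolved vertex- and edge-labeled tree (T*, t*, λ*) explaining (δ, ε): its tree T* is the unique tree with cluster system H(T*) = H(T_δ) ∪ H(T_ε), its vertex labeling t* is uniquely determined by δ, and λ* is the unique edge labeling of T* explaining ε with minimum total label count Σ_e |λ*(e)|. Moreover, contracting any edge of T* yields a tree that cannot explain (δ, ε) with any labelings. -/

import Mathlib

/-!
A discriminating tree `(T_δ, t_δ)` is displayed by every tree `(T, t)` explaining `δ`: going down
from the root, the least vertex `w'` of `T` above the cluster of a vertex `v` of `T_δ` has exactly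
that cluster, for otherwise `w'` would carry the label of the parent of `v`, and so would some pair
of leaves whose lca in `T_δ` is `v`. Together with the least-resolved edge-labeled tree `T_ε`, this
puts `H(T_δ) ∪ H(T_ε)` inside the cluster system of every tree explaining `(δ, ε)`. Hence it is a
hierarchy, whose tree `T*` explains `(δ, ε)` with the labels carried over along equal clusters.
Vertex labels at inner vertices are forced by the pairs of leaves having them as lca, and the edge
labels copied from `T_ε` lie below those of every edge labeling of `T*` explaining `ε`, which makes
them the unique minimizer of the label count. Contracting the edge above `u` destroys the cluster of
`u`, which every tree explaining `(δ, ε)` must display.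
-/

/-- A rooted phylogenetic tree with leaf set `L`: a finite vertex type `V`,
a root, a parent map (the root is its own parent), every vertex reaches the
root by iterating `parent`, the leaves are exactly the vertices without
children and are in bijection with `L`, and every inner vertex has at least
two children. -/
structure PhyloTree (L : Type) : Type 1 where
  V : Type
  fintypeV : Fintype V
  root : V
  parent : V → V
  leaf : L → V
  parent_root : parent root = root
  reach : ∀ v : V, ∃ n : ℕ, parent^[n] v = root
  leaf_inj : Function.Injective leaf
  leaf_iff : ∀ v : V, (∀ u : V, parent u = v → u = v) ↔ ∃ x : L, leaf x = v
  phylo : ∀ v : V, (¬ ∃ x : L, leaf x = v) →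
      ∃ u u' : V, u ≠ u' ∧ parent u = v ∧ parent u' = v ∧ u ≠ v ∧ u' ≠ v

namespace PhyloTree

variable {L : Type} (T : PhyloTree L)

/-- `v` is an ancestor (or equal) of `w`. -/
def anc (v w : T.V) : Prop := ∃ n : ℕ, T.parent^[n] w = v

def isLeaf (v : T.V) : Prop := ∃ x : L, T.leaf x = v

/-- The cluster `L(T(v))`: the set of leaves below `v`. -/
def cluster (v : T.V) : Set L := {x : L | T.anc v (T.leaf x)}

/-- The cluster system `H(T)`. -/
def clusters : Set (Set L) := Set.range T.cluster

/-- `w` is the last common ancestor of the leaves `x` and `y`. -/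
def isLCA (x y : L) (w : T.V) : Prop :=
  T.anc w (T.leaf x) ∧ T.anc w (T.leaf y) ∧
    ∀ u : T.V, T.anc u (T.leaf x) → T.anc u (T.leaf y) → T.anc u w

/-- `u` is a child of `v`. -/
def childOf (u v : T.V) : Prop := T.parent u = v ∧ u ≠ v

/-- The edge `{parent u, u}` (encoded by its lower endpoint `u`) is an inner edge. -/
def innerEdge (u : T.V) : Prop := T.parent u ≠ u ∧ ¬ T.isLeaf u

/-- The edge `{parent u, u}` lies on the path from the vertex `w` down to the leaf `y`. -/
def onPath (w : T.V) (y : L) (u : T.V) : Prop :=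
  T.anc w u ∧ u ≠ w ∧ T.anc u (T.leaf y)

/-- The vertex-labeled tree `(T,t)` explains `δ`. -/
def ExplainsDelta {M : Type} (t : T.V → M) (δ : L → L → M) : Prop :=
  ∀ x y : L, x ≠ y → ∀ w : T.V, T.isLCA x y w → t w = δ x y

/-- The edge-labeled tree `(T,λ)` explains `ε`; edge labels are encoded on the
lower endpoint of each edge. -/
def ExplainsEps {N : Type} (lam : T.V → Finset N) (ε : L → L → Finset N) : Prop :=
  ∀ x y : L, x ≠ y → ∀ w : T.V, T.isLCA x y w →
    ∀ k : N, k ∈ ε x y ↔ ∃ u : T.V, T.onPath w y u ∧ k ∈ lam u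

/-- The vertex labeling is discriminating: the endpoints of every inner edge
carry distinct labels. -/
def Discriminating {M : Type} (t : T.V → M) : Prop :=
  ∀ u : T.V, T.innerEdge u → t u ≠ t (T.parent u)

/-- Total number of labels over all edges, `Σ_{e ∈ E(T)} |λ(e)|`. -/
noncomputable def labelSum {N : Type} (lam : T.V → Finset N) : ℕ :=
  letI := T.fintypeV
  letI := Classical.decEq T.V
  ∑ v : T.V, if T.parent v = v then 0 else (lam v).card

/-- Condition (C): every inner vertex has a child joined by an empty-labeled edge. -/
def CondC {N : Type} (lam : T.V → Finset N) : Prop :=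
  ∀ v : T.V, ¬ T.isLeaf v → ∃ u : T.V, T.childOf u v ∧ lam u = ∅

/-- Condition (C1): if `t(v) ∈ M₀` then all edges from `v` to its children are empty. -/
def CondC1 {M N : Type} (t : T.V → M) (lam : T.V → Finset N) (M0 : Set M) : Prop :=
  ∀ v u : T.V, T.childOf u v → t v ∈ M0 → lam u = ∅

/-- Condition (C2): at every vertex, at most one edge to a child is nonempty. -/
def CondC2 {N : Type} (lam : T.V → Finset N) : Prop :=
  ∀ v u u' : T.V, T.childOf u v → T.childOf u' v → lam u ≠ ∅ → lam u' ≠ ∅ → u = u'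

/-- `(T1,λ1) ≤ (T2,λ2)`: the edge-labeled tree `(T2,λ2)` refines `(T1,λ1)`. -/
def LeLabeled {N : Type} (T1 : PhyloTree L) (lam1 : T1.V → Finset N)
    (T2 : PhyloTree L) (lam2 : T2.V → Finset N) : Prop :=
  T1.clusters ⊆ T2.clusters ∧
    ∀ (v1 : T1.V) (v2 : T2.V), T1.parent v1 ≠ v1 → T2.parent v2 ≠ v2 →
      T1.cluster v1 = T2.cluster v2 → lam1 v1 ⊆ lam2 v2

/-- `φ` witnesses that `T'` is obtained from `T` by contracting the inner edge
`{parent u, u}`. -/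
def IsContractionMap (T : PhyloTree L) (u : T.V) (T' : PhyloTree L)
    (φ : T.V → T'.V) : Prop :=
  T.innerEdge u ∧ Function.Surjective φ ∧ φ u = φ (T.parent u) ∧
    (∀ a b : T.V, φ a = φ b →
      a = b ∨ (a = u ∧ b = T.parent u) ∨ (b = u ∧ a = T.parent u)) ∧
    (∀ v : T.V, v ≠ u → T'.parent (φ v) = φ (T.parent v)) ∧
    (∀ x : L, φ (T.leaf x) = T'.leaf x) ∧ φ T.root = T'.root

/-- `T'` is obtained from `T` by contracting the inner edge `{parent u, u}`. -/
def ContractEdge (T : PhyloTree L) (u : T.V) (T' : PhyloTree L) : Prop :=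
  ∃ φ : T.V → T'.V, IsContractionMap T u T' φ

/-- Isomorphism of rooted trees on the same leaf set. -/
def Isomorphic (T1 T2 : PhyloTree L) : Prop :=
  ∃ φ : T1.V ≃ T2.V, (∀ v : T1.V, φ (T1.parent v) = T2.parent (φ v)) ∧
    ∀ x : L, φ (T1.leaf x) = T2.leaf x

def IsSymbolicUltrametric {M : Type} (δ : L → L → M) : Prop :=
  ∃ (T : PhyloTree L) (t : T.V → M), T.ExplainsDelta t δ

def IsFitchMap {N : Type} (ε : L → L → Finset N) : Prop :=
  ∃ (T : PhyloTree L) (lam : T.V → Finset N), T.ExplainsEps lam ε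

def TreeLike {M N : Type} (δ : L → L → M) (ε : L → L → Finset N) : Prop :=
  ∃ (T : PhyloTree L) (t : T.V → M) (lam : T.V → Finset N),
    T.ExplainsDelta t δ ∧ T.ExplainsEps lam ε

def MTreeLike {M N : Type} (δ : L → L → M) (ε : L → L → Finset N) (M0 : Set M) : Prop :=
  ∃ (T : PhyloTree L) (t : T.V → M) (lam : T.V → Finset N),
    T.ExplainsDelta t δ ∧ T.ExplainsEps lam ε ∧ T.CondC lam ∧ T.CondC1 t lam M0

end PhyloTree

/-- A hierarchy on `L`. -/
def IsHierarchy {L : Type} (H : Set (Set L)) : Prop :=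
  Set.univ ∈ H ∧ (∀ x : L, {x} ∈ H) ∧
    (∀ A ∈ H, ∀ B ∈ H, A ∩ B = A ∨ A ∩ B = B ∨ A ∩ B = (∅ : Set L)) ∧
    (∅ : Set L) ∉ H

namespace PhyloTree

variable {L : Type} {T : PhyloTree L}

lemma anc_refl (v : T.V) : T.anc v v := ⟨0, rfl⟩

lemma anc_trans {u v w : T.V} (huv : T.anc u v) (hvw : T.anc v w) : T.anc u w := by
  obtain ⟨n, rfl⟩ := huv
  obtain ⟨m, rfl⟩ := hvw
  exact ⟨n + m, Function.iterate_add_apply _ _ _ _⟩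

lemma anc_parent (v : T.V) : T.anc (T.parent v) v := ⟨1, rfl⟩

lemma anc_root (v : T.V) : T.anc T.root v := T.reach v

lemma eq_root_of_isPeriodicPt {v : T.V} {k : ℕ} (hk : 0 < k)
    (hv : Function.IsPeriodicPt T.parent k v) : v = T.root := by
  obtain ⟨n, hn⟩ := T.reach v
  have hle : n ≤ k * (n + 1) := by nlinarith
  calc v = T.parent^[k * (n + 1)] v := ((hv.mul_const (n + 1)).eq).symm
    _ = T.parent^[k * (n + 1) - n] (T.parent^[n] v) := by
        rw [← Function.iterate_add_apply, Nat.sub_add_cancel hle]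
    _ = T.root := by rw [hn, Function.iterate_fixed T.parent_root]

lemma induction_from_root {P : T.V → Prop} (root : P T.root)
    (step : ∀ v, v ≠ T.root → P (T.parent v) → P v) (v : T.V) : P v := by
  obtain ⟨n, hn⟩ := T.reach v
  induction n generalizing v with
  | zero => rw [Function.iterate_zero_apply] at hn; exact hn ▸ root
  | succ n ih =>
    by_cases hv : v = T.root
    · exact hv ▸ root
    · exact step v hv (ih _ hn)

lemma anc_antisymm {u v : T.V} (huv : T.anc u v) (hvu : T.anc v u) : u = v := by
  obtain ⟨n, hn⟩ := huv
  obtain ⟨m, hm⟩ := hvu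
  rcases Nat.eq_zero_or_pos (n + m) with h0 | hpos
  · simpa [show n = 0 by omega] using hn.symm
  · have hper : Function.IsPeriodicPt T.parent (n + m) u := by
      rw [Function.IsPeriodicPt, Function.IsFixedPt, Function.iterate_add_apply, hm, hn]
    have hu := eq_root_of_isPeriodicPt hpos hper
    rw [← hm, hu, Function.iterate_fixed T.parent_root]

lemma anc_total_of_anc {u v w : T.V} (hu : T.anc u w) (hv : T.anc v w) :
    T.anc u v ∨ T.anc v u := by
  obtain ⟨n, rfl⟩ := hu
  obtain ⟨m, rfl⟩ := hv
  rcases le_total n m with h | h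
  · exact Or.inr ⟨m - n, by rw [← Function.iterate_add_apply, Nat.sub_add_cancel h]⟩
  · exact Or.inl ⟨n - m, by rw [← Function.iterate_add_apply, Nat.sub_add_cancel h]⟩

lemma anc_parent_of_anc_of_ne {u v : T.V} (h : T.anc u v) (hne : u ≠ v) :
    T.anc u (T.parent v) := by
  obtain ⟨_ | n, hn⟩ := h
  · exact absurd hn.symm hne
  · exact ⟨n, by rwa [← Function.iterate_succ_apply]⟩

lemma parent_ne_iff {v : T.V} : T.parent v ≠ v ↔ v ≠ T.root := by
  refine ⟨fun h hv => h (hv ▸ T.parent_root), fun h hp => h ?_⟩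
  obtain ⟨n, hn⟩ := T.reach v
  rwa [Function.iterate_fixed hp] at hn

lemma childOf_parent {v : T.V} (hv : v ≠ T.root) : T.childOf v (T.parent v) :=
  ⟨rfl, fun h => parent_ne_iff.mpr hv h.symm⟩

lemma not_anc_of_childOf {c v : T.V} (hc : T.childOf c v) : ¬ T.anc c v :=
  fun h => hc.2 (anc_antisymm h (hc.1 ▸ anc_parent c))

lemma exists_childOf_anc {v w : T.V} (h : T.anc v w) (hne : w ≠ v) :
    ∃ c, T.childOf c v ∧ T.anc c w := by
  classical
  have hspec : T.parent^[Nat.find h] w = v := Nat.find_spec h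
  obtain ⟨n, hn⟩ : ∃ n, Nat.find h = n + 1 :=
    Nat.exists_eq_succ_of_ne_zero fun h0 => hne (by rwa [h0] at hspec)
  refine ⟨T.parent^[n] w, ⟨?_, fun hc => ?_⟩, ⟨n, rfl⟩⟩
  · rwa [hn, Function.iterate_succ_apply'] at hspec
  · exact Nat.find_min h (by omega : n < Nat.find h) hc

lemma exists_childOf_ne {v : T.V} (hv : ¬ T.isLeaf v) (c : T.V) :
    ∃ e, T.childOf e v ∧ e ≠ c := by
  obtain ⟨u, u', hne, hu, hu', huv, hu'v⟩ := T.phylo v hv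
  by_cases huc : u = c
  · exact ⟨u', ⟨hu', hu'v⟩, huc ▸ hne.symm⟩
  · exact ⟨u, ⟨hu, huv⟩, huc⟩

lemma childOf_not_anc {c c' v : T.V} (hc : T.childOf c v) (hc' : T.childOf c' v)
    (hne : c ≠ c') : ¬ T.anc c c' := fun h =>
  not_anc_of_childOf hc (hc'.1 ▸ anc_parent_of_anc_of_ne h hne)

lemma eq_leaf_of_anc_leaf {x : L} {w : T.V} (h : T.anc (T.leaf x) w) : w = T.leaf x := by
  obtain ⟨n, hn⟩ := h
  induction n generalizing w with
  | zero => exact hn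
  | succ n ih =>
    rw [Function.iterate_succ_apply] at hn
    exact ((T.leaf_iff _).mpr ⟨x, rfl⟩) w (ih hn)

lemma exists_leaf_anc (v : T.V) : ∃ x, T.anc v (T.leaf x) := by
  have := T.fintypeV
  -- a descendant of `v` with a maximal set of ancestors has no child
  obtain ⟨u, hvu, hmax⟩ := Set.Finite.exists_maximalFor (fun u => {a | T.anc a u})
    {u | T.anc v u} (Set.toFinite _) ⟨v, anc_refl v⟩
  by_contra hnone
  obtain ⟨c, c', -, hc, -, hcu, -⟩ := T.phylo u fun ⟨x, hx⟩ => hnone ⟨x, hx ▸ hvu⟩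
  have hsub : {a | T.anc a u} ⊆ {a | T.anc a c} := fun a ha => anc_trans ha (hc ▸ anc_parent c)
  exact not_anc_of_childOf ⟨hc, hcu⟩ (hmax (anc_trans hvu (hc ▸ anc_parent c)) hsub (anc_refl c))


lemma cluster_nonempty (v : T.V) : (T.cluster v).Nonempty := exists_leaf_anc v

lemma cluster_mono {u v : T.V} (h : T.anc u v) : T.cluster v ⊆ T.cluster u :=
  fun _ hx => anc_trans h hx

lemma cluster_root : T.cluster T.root = Set.univ :=
  Set.eq_univ_of_forall fun x => anc_root (T.leaf x)

lemma cluster_leaf (x : L) : T.cluster (T.leaf x) = {x} := by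
  ext y
  exact ⟨fun h => T.leaf_inj (eq_leaf_of_anc_leaf h), fun h => h ▸ anc_refl _⟩

lemma cluster_subset_of_childOf {c v : T.V} (hc : T.childOf c v) : T.cluster c ⊆ T.cluster v :=
  cluster_mono (hc.1 ▸ anc_parent c)

lemma disjoint_cluster_of_childOf {c c' v : T.V} (hc : T.childOf c v) (hc' : T.childOf c' v)
    (hne : c ≠ c') : Disjoint (T.cluster c) (T.cluster c') :=
  Set.disjoint_left.mpr fun _ hx hx' => (anc_total_of_anc hx hx').elim
    (childOf_not_anc hc hc' hne) (childOf_not_anc hc' hc hne.symm)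

lemma exists_childOf_mem_cluster {v : T.V} (hv : ¬ T.isLeaf v) {x : L}
    (hx : x ∈ T.cluster v) : ∃ c, T.childOf c v ∧ x ∈ T.cluster c :=
  exists_childOf_anc hx fun h => hv ⟨x, h⟩

lemma cluster_subset_cluster_iff {u v : T.V} : T.cluster u ⊆ T.cluster v ↔ T.anc v u := by
  refine ⟨fun hsub => ?_, cluster_mono⟩
  obtain ⟨x, hx⟩ := cluster_nonempty u
  rcases anc_total_of_anc (hsub hx) hx with hvu | huv
  · exact hvu
  by_cases hvu : v = u
  · exact hvu ▸ anc_refl v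
  exfalso
  obtain ⟨c, hc, hcv⟩ := exists_childOf_anc huv hvu
  have hu : ¬ T.isLeaf u := fun ⟨z, hz⟩ => hvu ((eq_leaf_of_anc_leaf (hz ▸ huv)).trans hz)
  obtain ⟨d, hd, hdc⟩ := exists_childOf_ne hu c
  obtain ⟨y, hy⟩ := cluster_nonempty d
  exact Set.disjoint_left.mp (disjoint_cluster_of_childOf hd hc hdc) hy
    (cluster_mono hcv (hsub (cluster_subset_of_childOf hd hy)))

lemma cluster_injective : Function.Injective T.cluster := fun _ _ h =>
  anc_antisymm (cluster_subset_cluster_iff.mp h.ge) (cluster_subset_cluster_iff.mp h.le)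

lemma cluster_eq_univ_iff {v : T.V} : T.cluster v = Set.univ ↔ v = T.root :=
  ⟨fun h => cluster_injective (h.trans cluster_root.symm), fun h => h ▸ cluster_root⟩

lemma clusters_isHierarchy (T : PhyloTree L) : IsHierarchy T.clusters := by
  refine ⟨⟨T.root, cluster_root⟩, fun x => ⟨T.leaf x, cluster_leaf x⟩, ?_,
    fun ⟨v, hv⟩ => (cluster_nonempty v).ne_empty hv⟩
  rintro _ ⟨u, rfl⟩ _ ⟨v, rfl⟩
  by_cases hvu : T.anc v u
  · exact Or.inl (Set.inter_eq_left.mpr (cluster_mono hvu))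
  by_cases huv : T.anc u v
  · exact Or.inr (Or.inl (Set.inter_eq_right.mpr (cluster_mono huv)))
  refine Or.inr (Or.inr (Set.disjoint_iff_inter_eq_empty.mp (Set.disjoint_left.mpr ?_)))
  exact fun x hu hv => (anc_total_of_anc hu hv).elim huv hvu


lemma exists_least_cluster_superset {A : Set L} (hA : A.Nonempty) :
    ∃ w, A ⊆ T.cluster w ∧ ∀ u, A ⊆ T.cluster u → T.anc u w := by
  have := T.fintypeV
  obtain ⟨w, hw, hmin⟩ := Set.Finite.exists_minimalFor T.cluster {u | A ⊆ T.cluster u}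
    (Set.toFinite _) ⟨T.root, by simp [cluster_root]⟩
  refine ⟨w, hw, fun u hu => ?_⟩
  obtain ⟨x, hx⟩ := hA
  rcases anc_total_of_anc (hu hx) (hw hx) with huw | hwu
  · exact huw
  · exact cluster_subset_cluster_iff.mp (hmin hu (cluster_mono hwu))

lemma exists_isLCA (x y : L) : ∃ w, T.isLCA x y w := by
  obtain ⟨w, hw, hmin⟩ := exists_least_cluster_superset (T := T) (Set.insert_nonempty x {y})
  obtain ⟨hx, hy⟩ := Set.pair_subset_iff.mp hw
  exact ⟨w, hx, hy, fun u hux huy => hmin u (Set.pair_subset_iff.mpr ⟨hux, huy⟩)⟩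

lemma isLCA_symm {x y : L} {w : T.V} (h : T.isLCA x y w) : T.isLCA y x w :=
  ⟨h.2.1, h.1, fun u hy hx => h.2.2 u hx hy⟩

lemma isLCA_of_childOf_of_notMem {c v : T.V} (hc : T.childOf c v) {x z : L}
    (hx : x ∈ T.cluster c) (hz : z ∈ T.cluster v) (hzc : z ∉ T.cluster c) : T.isLCA x z v := by
  refine ⟨cluster_subset_of_childOf hc hx, hz, fun u hux huz => ?_⟩
  rcases anc_total_of_anc hux hx with huc | hcu
  · have hne : u ≠ c := fun h => hzc (h ▸ huz)
    exact hc.1 ▸ anc_parent_of_anc_of_ne huc hne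
  · exact absurd (cluster_mono hcu huz) hzc

lemma isLCA_of_childOf_ne {c c' v : T.V} (hc : T.childOf c v) (hc' : T.childOf c' v)
    (hne : c ≠ c') {x y : L} (hx : x ∈ T.cluster c) (hy : y ∈ T.cluster c') : T.isLCA x y v :=
  isLCA_of_childOf_of_notMem hc hx (cluster_subset_of_childOf hc' hy)
    (Set.disjoint_right.mp (disjoint_cluster_of_childOf hc hc' hne) hy)

lemma exists_isLCA_of_not_isLeaf {v : T.V} (hv : ¬ T.isLeaf v) :
    ∃ x y, x ≠ y ∧ T.isLCA x y v := by
  obtain ⟨c, c', hne, hc, hc', hcv, hc'v⟩ := T.phylo v hv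
  obtain ⟨x, hx⟩ := cluster_nonempty c
  obtain ⟨y, hy⟩ := cluster_nonempty c'
  have hxc' : x ∉ T.cluster c' :=
    Set.disjoint_left.mp (disjoint_cluster_of_childOf ⟨hc, hcv⟩ ⟨hc', hc'v⟩ hne) hx
  exact ⟨x, y, (ne_of_mem_of_not_mem hy hxc').symm,
    isLCA_of_childOf_ne ⟨hc, hcv⟩ ⟨hc', hc'v⟩ hne hx hy⟩

lemma exists_isLCA_of_separated {v : T.V} (hv : ¬ T.isLeaf v) (P : L → Prop) {a b : L}
    (ha : a ∈ T.cluster v) (hb : b ∈ T.cluster v) (hPa : P a) (hPb : ¬ P b) :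
    ∃ x y, P x ∧ ¬ P y ∧ T.isLCA x y v := by
  obtain ⟨c, hc, hac⟩ := exists_childOf_mem_cluster hv ha
  obtain ⟨d, hd, hbd⟩ := exists_childOf_mem_cluster hv hb
  by_cases hcd : c = d
  · obtain ⟨e, he, hec⟩ := exists_childOf_ne hv c
    obtain ⟨z, hz⟩ := cluster_nonempty e
    by_cases hPz : P z
    · exact ⟨z, b, hPz, hPb, isLCA_of_childOf_ne he hd (hcd ▸ hec) hz hbd⟩
    · exact ⟨a, z, hPa, hPz, isLCA_of_childOf_ne hc he hec.symm hac hz⟩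
  · exact ⟨a, b, hPa, hPb, isLCA_of_childOf_ne hc hd hcd hac hbd⟩

lemma onPath_iff {x y : L} {w u : T.V} (hw : T.isLCA x y w) :
    T.onPath w y u ↔ y ∈ T.cluster u ∧ x ∉ T.cluster u := by
  refine ⟨fun ⟨hwu, hne, hy⟩ => ⟨hy, fun hx => hne (anc_antisymm (hw.2.2 u hx hy) hwu)⟩,
    fun ⟨hy, hx⟩ => ⟨?_, fun h => hx (h ▸ hw.1), hy⟩⟩
  exact (anc_total_of_anc hw.2.1 hy).resolve_right fun huw => hx (cluster_mono huw hw.1)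

section Discriminating

variable {M : Type} {δ : L → L → M} {T1 T2 : PhyloTree L} {t1 : T1.V → M} {t2 : T2.V → M}

lemma cluster_mem_clusters_of_parent (h1 : T1.ExplainsDelta t1 δ) (hdisc : T1.Discriminating t1)
    (h2 : T2.ExplainsDelta t2 δ) {v : T1.V} (hv : v ≠ T1.root)
    (hp : T1.cluster (T1.parent v) ∈ T2.clusters) : T1.cluster v ∈ T2.clusters := by
  by_cases hleaf : T1.isLeaf v
  · obtain ⟨x, rfl⟩ := hleaf
    exact ⟨T2.leaf x, by rw [cluster_leaf, cluster_leaf]⟩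
  obtain ⟨w, hw⟩ := hp
  have hvp := childOf_parent hv
  obtain ⟨x0, hx0⟩ := cluster_nonempty v
  obtain ⟨w', hvw', hleast⟩ := T2.exists_least_cluster_superset ⟨x0, hx0⟩
  by_contra hne
  obtain ⟨z, hzw', hzv⟩ := Set.not_subset.mp fun h => hne ⟨w', h.antisymm hvw'⟩
  have hw'p : T2.cluster w' ⊆ T1.cluster (T1.parent v) :=
    hw ▸ cluster_mono (hleast w (hw ▸ cluster_subset_of_childOf hvp))
  have hw' : ¬ T2.isLeaf w' := by
    rintro ⟨y, rfl⟩
    rw [cluster_leaf] at hvw' hzw'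
    exact hzv ((hzw'.trans (hvw' hx0).symm) ▸ hx0)
  have hsplit : ∀ c, T2.childOf c w' → ∃ b ∈ T1.cluster v, b ∉ T2.cluster c := fun c hc =>
    Set.not_subset.mp fun h => not_anc_of_childOf hc (hleast c h)
  obtain ⟨d, hd, hzd⟩ := exists_childOf_mem_cluster hw' hzw'
  obtain ⟨a, ha, had⟩ := hsplit d hd
  have haz : a ≠ z := ne_of_mem_of_not_mem ha hzv
  have ht2 : t2 w' = t1 (T1.parent v) :=
    (h2 a z haz w' (isLCA_symm (isLCA_of_childOf_of_notMem hd hzd (hvw' ha) had))).trans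
      (h1 a z haz _ (isLCA_of_childOf_of_notMem hvp ha (hw'p hzw') hzv)).symm
  obtain ⟨c, hc, hx0c⟩ := exists_childOf_mem_cluster hw' (hvw' hx0)
  obtain ⟨b, hb, hbc⟩ := hsplit c hc
  obtain ⟨x, y, hx, hy, hlca⟩ :=
    exists_isLCA_of_separated hleaf (· ∈ T2.cluster c) hx0 hb hx0c hbc
  have hxy : x ≠ y := ne_of_mem_of_not_mem hx hy
  apply hdisc v ⟨parent_ne_iff.mpr hv, hleaf⟩
  calc t1 v = δ x y := h1 x y hxy v hlca
    _ = t2 w' := (h2 x y hxy w' (isLCA_of_childOf_of_notMem hc hx (hvw' hlca.2.1) hy)).symm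
    _ = t1 (T1.parent v) := ht2

lemma clusters_subset_of_discriminating (h1 : T1.ExplainsDelta t1 δ)
    (hdisc : T1.Discriminating t1) (h2 : T2.ExplainsDelta t2 δ) :
    T1.clusters ⊆ T2.clusters := by
  rintro _ ⟨v, rfl⟩
  refine induction_from_root (P := fun v => T1.cluster v ∈ T2.clusters) ?_
    (fun v hv hp => cluster_mem_clusters_of_parent h1 hdisc h2 hv hp) v
  exact ⟨T2.root, by rw [cluster_root, cluster_root]⟩

end Discriminating

section Contraction

variable {T' : PhyloTree L} {u : T.V} {φ : T.V → T'.V}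

lemma IsContractionMap.exists_iterate_parent_eq (h : IsContractionMap T u T' φ) (w : T.V)
    (n : ℕ) : ∃ m, T'.parent^[m] (φ w) = φ (T.parent^[n] w) := by
  obtain ⟨-, -, hu, -, hpar, -⟩ := h
  induction n with
  | zero => exact ⟨0, rfl⟩
  | succ n ih =>
    obtain ⟨m, hm⟩ := ih
    rw [Function.iterate_succ_apply']
    by_cases hnu : T.parent^[n] w = u
    · exact ⟨m, by rw [hm, hnu, hu]⟩
    · exact ⟨m + 1, by rw [Function.iterate_succ_apply', hm, hpar _ hnu]⟩

lemma IsContractionMap.exists_eq_iterate_parent (h : IsContractionMap T u T' φ) (w : T.V)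
    (m : ℕ) : ∃ n, T'.parent^[m] (φ w) = φ (T.parent^[n] w) := by
  obtain ⟨⟨hinner, -⟩, -, hu, -, hpar, -⟩ := h
  induction m with
  | zero => exact ⟨0, rfl⟩
  | succ m ih =>
    obtain ⟨n, hn⟩ := ih
    rw [Function.iterate_succ_apply', hn]
    by_cases hnu : T.parent^[n] w = u
    · refine ⟨n + 2, ?_⟩
      rw [hnu, hu, hpar _ hinner, Function.iterate_succ_apply', Function.iterate_succ_apply', hnu]
    · exact ⟨n + 1, by rw [hpar _ hnu, Function.iterate_succ_apply']⟩

lemma IsContractionMap.cluster_apply (h : IsContractionMap T u T' φ) {v : T.V} (hv : v ≠ u) :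
    T'.cluster (φ v) = T.cluster v := by
  obtain ⟨-, -, -, hfiber, -, hleaf, -⟩ := id h
  ext x
  constructor
  · rintro ⟨m, hm⟩
    rw [← hleaf x] at hm
    obtain ⟨n, hn⟩ := h.exists_eq_iterate_parent (T.leaf x) m
    rcases hfiber _ _ (hn ▸ hm) with heq | ⟨hnu, hvu⟩ | ⟨hvu, -⟩
    · exact ⟨n, heq⟩
    · exact ⟨n + 1, by rw [Function.iterate_succ_apply', hnu, hvu]⟩
    · exact absurd hvu hv
  · rintro ⟨n, rfl⟩
    obtain ⟨m, hm⟩ := h.exists_iterate_parent_eq (T.leaf x) n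
    exact ⟨m, by rw [← hleaf x, hm]⟩

lemma IsContractionMap.cluster_notMem_clusters (h : IsContractionMap T u T' φ) :
    T.cluster u ∉ T'.clusters := by
  obtain ⟨⟨hpu, -⟩, hsurj, hu, -⟩ := id h
  rintro ⟨w, hw⟩
  obtain ⟨v, rfl⟩ := hsurj w
  by_cases hvu : v = u
  · subst hvu
    rw [hu, h.cluster_apply hpu] at hw
    exact hpu (cluster_injective hw)
  · exact hvu (cluster_injective ((h.cluster_apply hvu).symm.trans hw))

end Contraction

end PhyloTree

namespace IsHierarchy

variable {L : Type} {H : Set (Set L)}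

lemma nonempty_of_mem (hH : IsHierarchy H) {C : Set L} (hC : C ∈ H) : C.Nonempty :=
  Set.nonempty_iff_ne_empty.mpr fun h => hH.2.2.2 (h ▸ hC)

lemma subset_or_subset (hH : IsHierarchy H) {A B : Set L} (hA : A ∈ H) (hB : B ∈ H)
    (hAB : (A ∩ B).Nonempty) : A ⊆ B ∨ B ⊆ A := by
  rcases hH.2.2.1 A hA B hB with h | h | h
  · exact Or.inl (Set.inter_eq_left.mp h)
  · exact Or.inr (Set.inter_eq_right.mp h)
  · exact absurd h hAB.ne_empty

lemma exists_least_ssuperset (hH : IsHierarchy H) (hfin : H.Finite) {C : Set L} (hC : C ∈ H)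
    (hne : C ≠ Set.univ) : ∃ P ∈ H, C ⊂ P ∧ ∀ A ∈ H, C ⊂ A → P ⊆ A := by
  obtain ⟨P, ⟨hP, hCP⟩, hmin⟩ := Set.Finite.exists_minimal (s := {A | A ∈ H ∧ C ⊂ A})
    (hfin.subset fun _ h => h.1) ⟨Set.univ, hH.1, Set.ssubset_univ_iff.mpr hne⟩
  refine ⟨P, hP, hCP, fun A hA hCA => ?_⟩
  obtain ⟨x, hx⟩ := hH.nonempty_of_mem hC
  rcases hH.subset_or_subset hP hA ⟨x, hCP.1 hx, hCA.1 hx⟩ with hPA | hAP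
  · exact hPA
  · exact hmin ⟨hA, hCA⟩ hAP

lemma exists_greatest_ssubset_mem (hH : IsHierarchy H) (hfin : H.Finite) {C : Set L} {x : L}
    (hx : x ∈ C) (hne : {x} ≠ C) :
    ∃ D ∈ H, x ∈ D ∧ D ⊂ C ∧ ∀ A ∈ H, x ∈ A → A ⊂ C → A ⊆ D := by
  obtain ⟨D, ⟨hD, hxD, hDC⟩, hmax⟩ := Set.Finite.exists_maximal
    (s := {A | A ∈ H ∧ x ∈ A ∧ A ⊂ C}) (hfin.subset fun _ h => h.1)
    ⟨{x}, hH.2.1 x, rfl, Set.ssubset_iff_subset_ne.mpr ⟨Set.singleton_subset_iff.mpr hx, hne⟩⟩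
  refine ⟨D, hD, hxD, hDC, fun A hA hxA hAC => ?_⟩
  rcases hH.subset_or_subset hA hD ⟨x, hxA, hxD⟩ with hAD | hDA
  · exact hAD
  · exact hmax ⟨hA, hxA, hAC⟩ hDA

variable (hH : IsHierarchy H) (hfin : H.Finite)

open Classical in
noncomputable def parent (C : H) : H :=
  if h : C.1 = Set.univ then C
  else ⟨(hH.exists_least_ssuperset hfin C.2 h).choose,
    (hH.exists_least_ssuperset hfin C.2 h).choose_spec.1⟩

lemma parent_of_eq_univ {C : H} (h : C.1 = Set.univ) : hH.parent hfin C = C := by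
  rw [parent, dif_pos h]

lemma ssubset_parent {C : H} (h : C.1 ≠ Set.univ) : C.1 ⊂ (hH.parent hfin C).1 := by
  rw [parent, dif_neg h]
  exact (hH.exists_least_ssuperset hfin C.2 h).choose_spec.2.1

lemma parent_subset {C : H} (h : C.1 ≠ Set.univ) {A : Set L} (hA : A ∈ H) (hCA : C.1 ⊂ A) :
    (hH.parent hfin C).1 ⊆ A := by
  rw [parent, dif_neg h]
  exact (hH.exists_least_ssuperset hfin C.2 h).choose_spec.2.2 A hA hCA

lemma subset_iterate_parent (C : H) (n : ℕ) : C.1 ⊆ ((hH.parent hfin)^[n] C).1 := by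
  induction n with
  | zero => exact subset_rfl
  | succ n ih =>
    rw [Function.iterate_succ_apply']
    by_cases h : ((hH.parent hfin)^[n] C).1 = Set.univ
    · rwa [hH.parent_of_eq_univ hfin h]
    · exact ih.trans (hH.ssubset_parent hfin h).1

lemma exists_iterate_parent_eq {A B : H} (hBA : B.1 ⊆ A.1) :
    ∃ n, (hH.parent hfin)^[n] B = A := by
  induction hk : {X | X ∈ H ∧ B.1 ⊂ X}.ncard using Nat.strong_induction_on generalizing B with
  | _ k ih =>
    by_cases hB : B = A
    · exact ⟨0, hB⟩
    have hBA' : B.1 ⊂ A.1 := Set.ssubset_iff_subset_ne.mpr ⟨hBA, fun h => hB (Subtype.ext h)⟩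
    have huniv : B.1 ≠ Set.univ := fun h =>
      hBA'.ne (h.trans (Set.univ_subset_iff.mp (h ▸ hBA)).symm)
    have hlt : {X | X ∈ H ∧ (hH.parent hfin B).1 ⊂ X}.ncard < k := by
      rw [← hk]
      refine Set.ncard_lt_ncard ⟨fun X hX => ⟨hX.1, (hH.ssubset_parent hfin huniv).trans hX.2⟩,
        fun hsub => (hsub ⟨(hH.parent hfin B).2, hH.ssubset_parent hfin huniv⟩).2.ne rfl⟩
        (hfin.subset fun _ h => h.1)
    obtain ⟨n, hn⟩ := ih _ hlt (hH.parent_subset hfin huniv A.2 hBA') rfl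
    exact ⟨n + 1, hn⟩

lemma exists_parent_eq {C : Set L} (hC : C ∈ H) {x : L} (hx : x ∈ C) (hne : {x} ≠ C) :
    ∃ D : H, x ∈ D.1 ∧ D.1 ⊂ C ∧ hH.parent hfin D = ⟨C, hC⟩ := by
  obtain ⟨D, hD, hxD, hDC, hmax⟩ := hH.exists_greatest_ssubset_mem hfin hx hne
  have huniv : D ≠ Set.univ := fun h => hDC.ne (h.trans (Set.univ_subset_iff.mp (h ▸ hDC.1)).symm)
  have hDP := hH.ssubset_parent hfin (C := ⟨D, hD⟩) huniv
  refine ⟨⟨D, hD⟩, hxD, hDC, Subtype.ext ((hH.parent_subset hfin huniv hC hDC).antisymm ?_)⟩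
  rcases hH.subset_or_subset hC (hH.parent hfin ⟨D, hD⟩).2 ⟨x, hx, hDP.1 hxD⟩ with hCP | hPC
  · exact hCP
  · by_contra hCP
    exact hDP.2 (hmax _ (hH.parent hfin _).2 (hDP.1 hxD) (hPC.ssubset_of_not_subset hCP))

lemma forall_parent_eq_imp_eq_iff (C : H) :
    (∀ D, hH.parent hfin D = C → D = C) ↔ ∃ x, (⟨{x}, hH.2.1 x⟩ : H) = C := by
  constructor
  · intro hC
    by_contra hsingle
    obtain ⟨x, hx⟩ := hH.nonempty_of_mem C.2
    obtain ⟨D, -, hDC, hD⟩ :=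
      hH.exists_parent_eq hfin C.2 hx fun h => hsingle ⟨x, Subtype.ext h⟩
    exact hDC.ne (congrArg Subtype.val (hC D hD))
  · rintro ⟨x, rfl⟩ D hD
    by_cases huniv : D.1 = Set.univ
    · rw [← hD, hH.parent_of_eq_univ hfin huniv]
    · have hDx := hH.ssubset_parent hfin huniv
      rw [hD, Set.ssubset_singleton_iff] at hDx
      exact absurd hDx (hH.nonempty_of_mem D.2).ne_empty

lemma exists_two_children (C : H) (hC : ¬ ∃ x, (⟨{x}, hH.2.1 x⟩ : H) = C) :
    ∃ D D', D ≠ D' ∧ hH.parent hfin D = C ∧ hH.parent hfin D' = C ∧ D ≠ C ∧ D' ≠ C := by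
  have hne : ∀ x, {x} ≠ C.1 := fun x h => hC ⟨x, Subtype.ext h⟩
  obtain ⟨x, hx⟩ := hH.nonempty_of_mem C.2
  obtain ⟨D, hxD, hDC, hD⟩ := hH.exists_parent_eq hfin C.2 hx (hne x)
  obtain ⟨y, hyC, hyD⟩ := Set.exists_of_ssubset hDC
  obtain ⟨D', hyD', hD'C, hD'⟩ := hH.exists_parent_eq hfin C.2 hyC (hne y)
  exact ⟨D, D', fun h => hyD (h ▸ hyD'), hD, hD', fun h => hDC.ne (congrArg Subtype.val h),
    fun h => hD'C.ne (congrArg Subtype.val h)⟩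

noncomputable def toPhyloTree : PhyloTree L where
  V := H
  fintypeV := hfin.fintype
  root := ⟨Set.univ, hH.1⟩
  parent := hH.parent hfin
  leaf x := ⟨{x}, hH.2.1 x⟩
  parent_root := hH.parent_of_eq_univ hfin rfl
  reach C := hH.exists_iterate_parent_eq hfin (Set.subset_univ C.1)
  leaf_inj _ _ h := Set.singleton_injective (congrArg Subtype.val h)
  leaf_iff := hH.forall_parent_eq_imp_eq_iff hfin
  phylo := hH.exists_two_children hfin

lemma anc_toPhyloTree_iff {A B : H} : (hH.toPhyloTree hfin).anc A B ↔ B.1 ⊆ A.1 :=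
  ⟨fun ⟨n, hn⟩ => hn ▸ hH.subset_iterate_parent hfin B n, hH.exists_iterate_parent_eq hfin⟩

lemma clusters_toPhyloTree : (hH.toPhyloTree hfin).clusters = H := by
  have hcl : ∀ C : H, (hH.toPhyloTree hfin).cluster C = C.1 := fun C =>
    Set.ext fun x => (hH.anc_toPhyloTree_iff hfin).trans Set.singleton_subset_iff
  ext A
  exact ⟨fun ⟨C, hC⟩ => hC ▸ (hcl C).symm ▸ C.2, fun hA => ⟨⟨A, hA⟩, hcl ⟨A, hA⟩⟩⟩

end IsHierarchy

namespace PhyloTree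

variable {L M N : Type} {δ : L → L → M} {ε : L → L → Finset N}

lemma exists_clusters_eq_of_subset {H : Set (Set L)} {T : PhyloTree L} (hsub : H ⊆ T.clusters)
    (huniv : Set.univ ∈ H) (hsingle : ∀ x, {x} ∈ H) : ∃ T' : PhyloTree L, T'.clusters = H := by
  have := T.fintypeV
  have hH : IsHierarchy H := ⟨huniv, hsingle,
    fun A hA B hB => T.clusters_isHierarchy.2.2.1 A (hsub hA) B (hsub hB),
    fun h => T.clusters_isHierarchy.2.2.2 (hsub h)⟩
  exact ⟨hH.toPhyloTree ((Set.finite_range T.cluster).subset hsub), hH.clusters_toPhyloTree _⟩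

lemma cluster_parent_subset_of_clusters_subset {T1 T2 : PhyloTree L}
    (h : T2.clusters ⊆ T1.clusters) {v1 : T1.V} {v2 : T2.V} (hv2 : v2 ≠ T2.root)
    (hcl : T1.cluster v1 = T2.cluster v2) :
    T1.cluster (T1.parent v1) ⊆ T2.cluster (T2.parent v2) := by
  obtain ⟨u, hu⟩ := h ⟨T2.parent v2, rfl⟩
  have hanc : T1.anc u v1 := cluster_subset_cluster_iff.mp (hcl ▸ hu ▸ cluster_mono (anc_parent v2))
  have hne : u ≠ v1 := fun huv =>
    parent_ne_iff.mpr hv2 (cluster_injective (hu.symm.trans (huv ▸ hcl)))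
  exact hu ▸ cluster_mono (anc_parent_of_anc_of_ne hanc hne)

lemma isomorphic_of_clusters_eq {T1 T2 : PhyloTree L} (h : T1.clusters = T2.clusters) :
    T1.Isomorphic T2 := by
  choose φ hφ using fun v : T1.V => (h ▸ ⟨v, rfl⟩ : T1.cluster v ∈ T2.clusters)
  have hbij : Function.Bijective φ := by
    refine ⟨fun a b hab => cluster_injective ((hφ a).symm.trans (hab ▸ hφ b)), fun w => ?_⟩
    obtain ⟨v, hv⟩ := (h.symm ▸ ⟨w, rfl⟩ : T2.cluster w ∈ T1.clusters)
    exact ⟨v, cluster_injective ((hφ v).trans hv)⟩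
  refine ⟨Equiv.ofBijective φ hbij, fun v => ?_,
    fun x => cluster_injective ((hφ _).trans (by rw [cluster_leaf, cluster_leaf]))⟩
  change φ (T1.parent v) = T2.parent (φ v)
  by_cases hv : v = T1.root
  · have hφr : φ T1.root = T2.root := cluster_injective (by rw [hφ, cluster_root, cluster_root])
    rw [hv, T1.parent_root, hφr, T2.parent_root]
  have hφv : φ v ≠ T2.root := fun hr =>
    hv (cluster_eq_univ_iff.mp ((hφ v).symm.trans (hr ▸ cluster_root)))
  apply cluster_injective
  rw [hφ]
  exact (cluster_parent_subset_of_clusters_subset h.ge hφv (hφ v).symm).antisymm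
    (cluster_parent_subset_of_clusters_subset h.le hv (hφ v))

lemma ExplainsDelta.exists_of_clusters_subset {S R : PhyloTree L} {t : S.V → M}
    (ht : S.ExplainsDelta t δ) (hsub : S.clusters ⊆ R.clusters) :
    ∃ tR : R.V → M, R.ExplainsDelta tR δ := by
  choose s hs hleast using fun w : R.V => S.exists_least_cluster_superset (R.cluster_nonempty w)
  refine ⟨t ∘ s, fun x y hxy w hw =>
    ht x y hxy (s w) ⟨hs w hw.1, hs w hw.2.1, fun u hx hy => hleast w u ?_⟩⟩
  obtain ⟨r, hr⟩ := hsub ⟨u, rfl⟩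
  have hx' : x ∈ R.cluster r := hr ▸ hx
  have hy' : y ∈ R.cluster r := hr ▸ hy
  exact hr ▸ cluster_mono (hw.2.2 r hx' hy')

lemma ExplainsDelta.eq_of_not_isLeaf {T : PhyloTree L} {t t' : T.V → M}
    (ht : T.ExplainsDelta t δ) (ht' : T.ExplainsDelta t' δ) {v : T.V} (hv : ¬ T.isLeaf v) :
    t v = t' v := by
  obtain ⟨x, y, hxy, hlca⟩ := exists_isLCA_of_not_isLeaf hv
  exact (ht x y hxy v hlca).trans (ht' x y hxy v hlca).symm

open Classical in
noncomputable def transferLabels (S : PhyloTree L) (lam : S.V → Finset N) (R : PhyloTree L)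
    (w : R.V) : Finset N :=
  if h : ∃ u, S.cluster u = R.cluster w then lam h.choose else ∅

section Transfer

variable {S R : PhyloTree L} {lam : S.V → Finset N}

lemma mem_transferLabels {w : R.V} {k : N} :
    k ∈ transferLabels S lam R w ↔ ∃ u, S.cluster u = R.cluster w ∧ k ∈ lam u := by
  unfold transferLabels
  split_ifs with h
  · refine ⟨fun hk => ⟨_, h.choose_spec, hk⟩, fun ⟨u, hu, hk⟩ => ?_⟩
    rwa [cluster_injective (h.choose_spec.trans hu.symm)]
  · simp only [Finset.notMem_empty, false_iff]
    exact fun ⟨u, hu, _⟩ => h ⟨u, hu⟩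

lemma ExplainsEps.of_clusters_subset (hlam : S.ExplainsEps lam ε) (hsub : S.clusters ⊆ R.clusters) :
    R.ExplainsEps (transferLabels S lam R) ε := by
  intro x y hxy w hw k
  obtain ⟨v, hv⟩ := S.exists_isLCA x y
  simp only [hlam x y hxy v hv k, onPath_iff hv, onPath_iff hw, mem_transferLabels]
  constructor
  · rintro ⟨u, hu, hk⟩
    obtain ⟨s, hs⟩ := hsub ⟨u, rfl⟩
    exact ⟨s, hs ▸ hu, u, hs.symm, hk⟩
  · rintro ⟨s, hs, u, hu, hk⟩
    exact ⟨u, hu ▸ hs, hk⟩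

lemma transferLabels_subset {l : R.V → Finset N} (hle : LeLabeled S lam R l) {v : R.V}
    (hv : R.parent v ≠ v) : transferLabels S lam R v ⊆ l v := by
  intro k hk
  obtain ⟨u, hu, hk⟩ := mem_transferLabels.mp hk
  have hu' : S.parent u ≠ u := parent_ne_iff.mpr fun hroot =>
    parent_ne_iff.mp hv (cluster_eq_univ_iff.mp (by rw [← hu, hroot, cluster_root]))
  exact hle.2 u v hu' hv hu hk

end Transfer

section LabelSum

variable {T : PhyloTree L} {l l' : T.V → Finset N}

lemma labelSum_le_labelSum (h : ∀ v, T.parent v ≠ v → l v ⊆ l' v) :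
    T.labelSum l ≤ T.labelSum l' := by
  refine Finset.sum_le_sum fun v _ => ?_
  split_ifs with hv
  · exact le_rfl
  · exact Finset.card_le_card (h v hv)

lemma eq_of_labelSum_eq (h : ∀ v, T.parent v ≠ v → l v ⊆ l' v)
    (hsum : T.labelSum l' = T.labelSum l) (v : T.V) (hv : T.parent v ≠ v) : l' v = l v := by
  unfold labelSum at hsum
  rw [eq_comm, Finset.sum_eq_sum_iff_of_le fun v _ => ?_] at hsum
  · have hcard := hsum v (@Finset.mem_univ _ T.fintypeV v)
    rw [if_neg hv, if_neg hv] at hcard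
    exact (Finset.eq_of_subset_of_card_le (h v hv) hcard.ge).symm
  · split_ifs with hv
    · exact le_rfl
    · exact Finset.card_le_card (h v hv)

end LabelSum

end PhyloTree

/-- If `(δ,ε)` is tree-like, then there is a unique
least-resolved doubly labeled tree `(T*,t*,λ*)` explaining `(δ,ε)`: its cluster
system is `H(T_δ) ∪ H(T_ε)` (determining `T*` up to isomorphism), `t*` is
uniquely determined by `δ`, `λ*` is the unique edge labeling of `T*` explaining
`ε` of minimum total label count, and contracting any inner edge of `T*` yields
a tree that cannot explain `(δ,ε)` with any labelings. -/
theorem statement10 {L M N : Type} (δ : L → L → M) (ε : L → L → Finset N)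
    (hTL : PhyloTree.TreeLike δ ε)
    (Tδ : PhyloTree L) (tδ : Tδ.V → M)
    (hδexp : Tδ.ExplainsDelta tδ δ) (hδdisc : Tδ.Discriminating tδ)
    (Tε : PhyloTree L) (lamε : Tε.V → Finset N) (hεexp : Tε.ExplainsEps lamε ε)
    (hεleast : ∀ (T : PhyloTree L) (lam : T.V → Finset N),
      T.ExplainsEps lam ε → PhyloTree.LeLabeled Tε lamε T lam) :
    ∃ (Tstar : PhyloTree L) (tstar : Tstar.V → M) (lstar : Tstar.V → Finset N),
      Tstar.clusters = Tδ.clusters ∪ Tε.clusters ∧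
      Tstar.ExplainsDelta tstar δ ∧ Tstar.ExplainsEps lstar ε ∧
      (∀ T' : PhyloTree L, T'.clusters = Tδ.clusters ∪ Tε.clusters →
        T'.Isomorphic Tstar) ∧
      (∀ t' : Tstar.V → M, Tstar.ExplainsDelta t' δ →
        ∀ v : Tstar.V, ¬ Tstar.isLeaf v → t' v = tstar v) ∧
      (∀ l' : Tstar.V → Finset N, Tstar.ExplainsEps l' ε →
        Tstar.labelSum lstar ≤ Tstar.labelSum l') ∧
      (∀ l' : Tstar.V → Finset N, Tstar.ExplainsEps l' ε →
        Tstar.labelSum l' = Tstar.labelSum lstar →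
        ∀ v : Tstar.V, Tstar.parent v ≠ v → l' v = lstar v) ∧
      (∀ u : Tstar.V, Tstar.innerEdge u → ∀ T' : PhyloTree L,
        PhyloTree.ContractEdge Tstar u T' →
        ¬ ∃ (t' : T'.V → M) (l' : T'.V → Finset N),
            T'.ExplainsDelta t' δ ∧ T'.ExplainsEps l' ε) := by
  obtain ⟨Tw, tw, lamw, hwδ, hwε⟩ := hTL
  have hrefines : ∀ (T : PhyloTree L) (t : T.V → M) (lam : T.V → Finset N),
      T.ExplainsDelta t δ → T.ExplainsEps lam ε → Tδ.clusters ∪ Tε.clusters ⊆ T.clusters :=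
    fun T t lam ht hlam => Set.union_subset
      (PhyloTree.clusters_subset_of_discriminating hδexp hδdisc ht) (hεleast T lam hlam).1
  obtain ⟨Tstar, hclusters⟩ :=
    PhyloTree.exists_clusters_eq_of_subset (hrefines Tw tw lamw hwδ hwε)
      (Or.inl ⟨Tδ.root, PhyloTree.cluster_root⟩)
      fun x => Or.inl ⟨Tδ.leaf x, PhyloTree.cluster_leaf x⟩
  obtain ⟨tstar, htstar⟩ := hδexp.exists_of_clusters_subset (hclusters ▸ Set.subset_union_left)
  set lstar := PhyloTree.transferLabels Tε lamε Tstar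
  have hmin : ∀ l', Tstar.ExplainsEps l' ε → ∀ v, Tstar.parent v ≠ v → lstar v ⊆ l' v :=
    fun l' hl' _ => PhyloTree.transferLabels_subset (hεleast _ _ hl')
  refine ⟨Tstar, tstar, lstar, hclusters, htstar,
    hεexp.of_clusters_subset (hclusters ▸ Set.subset_union_right),
    fun T' hT' => PhyloTree.isomorphic_of_clusters_eq (hT'.trans hclusters.symm),
    fun t' ht' v hv => ht'.eq_of_not_isLeaf htstar hv,
    fun l' hl' => PhyloTree.labelSum_le_labelSum (hmin l' hl'),
    fun l' hl' => PhyloTree.eq_of_labelSum_eq (hmin l' hl'), ?_⟩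
  rintro u - T' ⟨φ, hφ⟩ ⟨t', l', ht', hl'⟩
  exact hφ.cluster_notMem_clusters (hrefines T' t' l' ht' hl' (hclusters ▸ ⟨u, rfl⟩))
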